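/- (Commutativity of the two Euclidean parametrizations: φ ∘ F_D = F_L.) Let E = EuclideanSpace ℝ (Fin n) and let z ∈ E with z ≠ 0. Then φ(F_D(z)) = (Real.cosh ‖z‖, (Real.sinh ‖z‖/‖z‖) • z); explicitly, writing x := (Real.tanh (‖z‖/2)/‖z‖) • z, one has (1 + ‖x‖²)/(1 - ‖x‖²) = Real.cosh ‖z‖ and (2/(1 - ‖x‖²)) • x = (Real.sinh ‖z‖/‖z‖) • z. -/

import Mathlib

open RealInnerProductSpace

/-- The transition map from the Poincaré ball to the Lorentz model. -/
noncomputable def phi {n : ℕ} (x : EuclideanSpace ℝ (Fin n)) : ℝ × EuclideanSpace ℝ (Fin n) :=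
  ((1 + ‖x‖ ^ 2) / (1 - ‖x‖ ^ 2), (2 / (1 - ‖x‖ ^ 2)) • x)

/-- The Euclidean parametrization of the Poincaré ball, `F_D(z) = (tanh(‖z‖/2)/‖z‖) • z`
(which equals `0` at `z = 0`). -/
noncomputable def FD {n : ℕ} (z : EuclideanSpace ℝ (Fin n)) : EuclideanSpace ℝ (Fin n) :=
  (Real.tanh (‖z‖ / 2) / ‖z‖) • z

/-!
With `r = ‖z‖` and `t = tanh (r / 2)`, the point `F_D(z)` has norm `t`, so the claim is the pair of
hyperbolic half-angle formulas `cosh r = (1 + t²) / (1 - t²)` and `sinh r = 2t / (1 - t²)`,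
which follow from the double-angle formulas after clearing `1 - t² = cosh (r / 2)⁻²`.
-/

namespace Real

theorem one_sub_tanh_sq (x : ℝ) : 1 - tanh x ^ 2 = (cosh x ^ 2)⁻¹ := by
  rw [tanh_eq_sinh_div_cosh, div_pow]
  field_simp
  linear_combination cosh_sq_sub_sinh_sq x

theorem cosh_eq_one_add_tanh_half_sq_div_one_sub_tanh_half_sq (x : ℝ) :
    cosh x = (1 + tanh (x / 2) ^ 2) / (1 - tanh (x / 2) ^ 2) := by
  rw [one_sub_tanh_sq, tanh_eq_sinh_div_cosh]
  conv_lhs => rw [← mul_div_cancel₀ x two_ne_zero, cosh_two_mul]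
  field_simp

theorem sinh_eq_two_mul_tanh_half_div_one_sub_tanh_half_sq (x : ℝ) :
    sinh x = 2 * tanh (x / 2) / (1 - tanh (x / 2) ^ 2) := by
  rw [one_sub_tanh_sq, tanh_eq_sinh_div_cosh]
  conv_lhs => rw [← mul_div_cancel₀ x two_ne_zero, sinh_two_mul]
  field_simp

end Real

theorem norm_div_norm_smul {E : Type*} [NormedAddCommGroup E] [NormedSpace ℝ E] {a : ℝ}
    {z : E} (h : z = 0 → a = 0) : ‖(a / ‖z‖) • z‖ = |a| := by
  rw [norm_smul, Real.norm_eq_abs, abs_div, abs_norm]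
  exact div_mul_cancel_of_imp fun hz ↦ by rw [h (norm_eq_zero.mp hz), abs_zero]

theorem phi_comp_FD_eq_FL_general (n : ℕ) (z : EuclideanSpace ℝ (Fin n)) :
    phi (FD z) = (Real.cosh ‖z‖, (Real.sinh ‖z‖ / ‖z‖) • z) ∧
    (1 + ‖(Real.tanh (‖z‖ / 2) / ‖z‖) • z‖ ^ 2) / (1 - ‖(Real.tanh (‖z‖ / 2) / ‖z‖) • z‖ ^ 2) =
      Real.cosh ‖z‖ ∧
    (2 / (1 - ‖(Real.tanh (‖z‖ / 2) / ‖z‖) • z‖ ^ 2)) • ((Real.tanh (‖z‖ / 2) / ‖z‖) • z) =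
      (Real.sinh ‖z‖ / ‖z‖) • z := by
  have hnorm : ‖(Real.tanh (‖z‖ / 2) / ‖z‖) • z‖ ^ 2 = Real.tanh (‖z‖ / 2) ^ 2 := by
    rw [norm_div_norm_smul fun hz ↦ by simp [hz], sq_abs]
  have hcosh : (1 + ‖(Real.tanh (‖z‖ / 2) / ‖z‖) • z‖ ^ 2) /
      (1 - ‖(Real.tanh (‖z‖ / 2) / ‖z‖) • z‖ ^ 2) = Real.cosh ‖z‖ := by
    rw [hnorm, Real.cosh_eq_one_add_tanh_half_sq_div_one_sub_tanh_half_sq]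
  have hsinh : (2 / (1 - ‖(Real.tanh (‖z‖ / 2) / ‖z‖) • z‖ ^ 2)) •
      ((Real.tanh (‖z‖ / 2) / ‖z‖) • z) = (Real.sinh ‖z‖ / ‖z‖) • z := by
    rw [smul_smul, hnorm, Real.sinh_eq_two_mul_tanh_half_div_one_sub_tanh_half_sq]
    congr 1
    ring
  exact ⟨Prod.ext hcosh hsinh, hcosh, hsinh⟩

theorem phi_comp_FD_eq_FL (n : ℕ) (z : EuclideanSpace ℝ (Fin n)) (hz : z ≠ 0) :
    phi (FD z) = (Real.cosh ‖z‖, (Real.sinh ‖z‖ / ‖z‖) • z) ∧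
    (1 + ‖(Real.tanh (‖z‖ / 2) / ‖z‖) • z‖ ^ 2) / (1 - ‖(Real.tanh (‖z‖ / 2) / ‖z‖) • z‖ ^ 2) =
      Real.cosh ‖z‖ ∧
    (2 / (1 - ‖(Real.tanh (‖z‖ / 2) / ‖z‖) • z‖ ^ 2)) • ((Real.tanh (‖z‖ / 2) / ‖z‖) • z) =
      (Real.sinh ‖z‖ / ‖z‖) • z :=
  phi_comp_FD_eq_FL_general n z
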